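/- Let Φ : ℝ → ℝ be a function satisfying: (i) Φ(x) = 0 for all x < 0; (ii) Φ(x) = Φ(6 − x) + x − 3 for all x ∈ ℝ; (iii) Φ(0) ≤ 1, Φ(x) ≤ x/4 + 3/4 for all 0 < x < 2, Φ(x) ≤ x/3 + 2/3 for all 2 ≤ x < 5/2, and Φ(x) ≤ x/2 + 1/4 for all 5/2 ≤ x < 3. Then Φ(x) ≤ (x − 3)² + 19/10 for every real number x ≠ 3. -/
import Mathlib


/-- Corollary 6.4 (numerical content): a function `Φ : ℝ → ℝ` satisfying the
vanishing, symmetry, and piecewise linear bounds of a general genus four curve's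
Brill–Noether function is bounded by the parabola `(x-3)^2 + 19/10` away from `x = 3`. -/
theorem stmt_0 (Φ : ℝ → ℝ)
    (h_neg : ∀ x : ℝ, x < 0 → Φ x = 0)
    (h_symm : ∀ x : ℝ, Φ x = Φ (6 - x) + x - 3)
    (h_zero : Φ 0 ≤ 1)
    (h_b1 : ∀ x : ℝ, 0 < x → x < 2 → Φ x ≤ x / 4 + 3 / 4)
    (h_b2 : ∀ x : ℝ, 2 ≤ x → x < 5 / 2 → Φ x ≤ x / 3 + 2 / 3)
    (h_b3 : ∀ x : ℝ, 5 / 2 ≤ x → x < 3 → Φ x ≤ x / 2 + 1 / 4) :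
    ∀ x : ℝ, x ≠ 3 → Φ x ≤ (x - 3) ^ 2 + 19 / 10 := by
  -- first: a bound for all y < 3 : Φ y ≤ max of the linear pieces, enough for parabola
  have key : ∀ y : ℝ, y < 3 → Φ y ≤ (y - 3) ^ 2 + 19 / 10 := by
    intro y hy
    rcases lt_trichotomy y 0 with h0 | h0 | h0
    · rw [h_neg y h0]; nlinarith
    · subst h0; nlinarith
    · rcases lt_or_ge y 2 with h2 | h2
      · have := h_b1 y h0 h2; nlinarith
      · rcases lt_or_ge y (5/2) with h5 | h5
        · have := h_b2 y h2 h5; nlinarith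
        · have := h_b3 y h5 hy; nlinarith
  intro x hx
  rcases lt_or_gt_of_ne hx with h | h
  · exact key x h
  · -- x > 3; use symmetry with y = 6 - x < 3
    have hs := h_symm x
    set y := 6 - x with hy
    have hy3 : y < 3 := by simp [hy]; linarith
    rcases lt_trichotomy y 0 with h0 | h0 | h0
    · rw [hs, h_neg y h0]; nlinarith
    · have hx6 : x = 6 := by simp [hy] at h0; linarith
      rw [hs, h0, hx6]; nlinarith
    · rcases lt_or_ge y 2 with h2 | h2
      · have := h_b1 y h0 h2; rw [hs]; nlinarith
      · rcases lt_or_ge y (5/2) with h5 | h5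
        · have := h_b2 y h2 h5; rw [hs]; nlinarith
        · have := h_b3 y h5 hy3; rw [hs]; nlinarith
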